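/- For finite random variables (U,V) with n-fold iid copies, any ε ∈ (0,1), and any γ < I[U;V], for all sufficiently large n: (1/n) I₀^ε[Uⁿ;Vⁿ] ≥ γ. -/

import Mathlib

open Finset

/-- The n-fold iid product of a joint pmf `p` on `U × V`. -/
noncomputable def iidJoint {U V : Type*} (p : U × V → ℝ) (n : ℕ) :
    (Fin n → U) × (Fin n → V) → ℝ :=
  fun x => ∏ i, p (x.1 i, x.2 i)

/-- The classical smooth min Rényi divergence `I₀^ε`: the supremum over sets
`𝒜` with `p(𝒜) ≥ 1 - ε` of `-log₂ ∑_{(u,v)∈𝒜} p_U(u) p_V(v)` (with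
`p_U, p_V` the marginals of `p`). -/
noncomputable def IminSmooth {U V : Type*} [Fintype U] [Fintype V]
    (p : U × V → ℝ) (ε : ℝ) : ℝ :=
  sSup {x : ℝ | ∃ A : Finset (U × V),
    1 - ε ≤ ∑ y ∈ A, p y ∧
    x = - Real.logb 2 (∑ y ∈ A, (∑ v, p (y.1, v)) * (∑ u, p (u, y.2)))}

/-!
On the level set `𝒜 = {P ≥ 2^c p_U p_V}` of a joint distribution `P`, the product of the
marginals has mass at most `2^{-c} P(𝒜) ≤ 2^{-c}`, so `I₀^ε[P] ≥ c` as soon as `P(𝒜) ≥ 1 - ε`.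
For the iid product, `log₂ (P / p_U p_V)` is, on the support of `P`, a sum of `n` iid copies of
the information density, whose mean is `I[U;V]`. Taking `c = nγ'` with `γ < γ' < I[U;V]`,
Chebyshev's inequality bounds the mass where this sum falls below `nγ'` by
`Var / (n (I[U;V] - γ')²)`, which tends to `0`.
-/

open Filter

section ProdMarginals

variable {X Y : Type*} [Fintype X] [Fintype Y]

/-- `p_X(x) p_Y(y)`, the weight that `IminSmooth` sums over a set. -/
def prodMarginals (P : X × Y → ℝ) (y : X × Y) : ℝ :=
  (∑ v, P (y.1, v)) * (∑ u, P (u, y.2))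

/-- The information density, whose mean under `P` is the mutual information `I[X;Y]`. -/
noncomputable def infoDensity (P : X × Y → ℝ) (y : X × Y) : ℝ :=
  Real.logb 2 (P y / prodMarginals P y)

theorem prodMarginals_nonneg {P : X × Y → ℝ} (hP0 : ∀ x, 0 ≤ P x) (y : X × Y) :
    0 ≤ prodMarginals P y :=
  mul_nonneg (sum_nonneg fun _ _ => hP0 _) (sum_nonneg fun _ _ => hP0 _)

theorem prodMarginals_pos {P : X × Y → ℝ} (hP0 : ∀ x, 0 ≤ P x) {y : X × Y} (hy : 0 < P y) :
    0 < prodMarginals P y :=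
  mul_pos
    (hy.trans_le (single_le_sum (f := fun v => P (y.1, v)) (fun _ _ => hP0 _) (mem_univ y.2)))
    (hy.trans_le (single_le_sum (f := fun u => P (u, y.2)) (fun _ _ => hP0 _) (mem_univ y.1)))

theorem rpow_infoDensity_mul_prodMarginals {P : X × Y → ℝ} (hP0 : ∀ x, 0 ≤ P x) {y : X × Y}
    (hy : 0 < P y) : (2 : ℝ) ^ infoDensity P y * prodMarginals P y = P y := by
  have hm := prodMarginals_pos hP0 hy
  rw [infoDensity, Real.rpow_logb two_pos (by norm_num) (div_pos hy hm),
    div_mul_cancel₀ _ hm.ne']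

theorem neg_logb_le_IminSmooth (P : X × Y → ℝ) {ε : ℝ} {A : Finset (X × Y)}
    (hA : 1 - ε ≤ ∑ y ∈ A, P y) :
    -Real.logb 2 (∑ y ∈ A, prodMarginals P y) ≤ IminSmooth P ε := by
  refine le_csSup ?_ ⟨A, hA, rfl⟩
  refine ((Set.finite_range fun B : Finset (X × Y) =>
    -Real.logb 2 (∑ y ∈ B, prodMarginals P y)).subset ?_).bddAbove
  rintro _ ⟨B, -, rfl⟩
  exact ⟨B, rfl⟩

theorem le_IminSmooth {P : X × Y → ℝ} (hP0 : ∀ x, 0 ≤ P x) (hP1 : ∑ x, P x ≤ 1) {ε c : ℝ}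
    (hε : ε < 1) (hA : 1 - ε ≤ ∑ y with 2 ^ c * prodMarginals P y ≤ P y, P y) :
    c ≤ IminSmooth P ε := by
  classical
  set A := univ.filter fun y => 2 ^ c * prodMarginals P y ≤ P y
  have hS_le : ∑ y ∈ A, prodMarginals P y ≤ 2 ^ (-c) := calc
    ∑ y ∈ A, prodMarginals P y ≤ ∑ y ∈ A, 2 ^ (-c) * P y := by
      refine sum_le_sum fun y hy => ?_
      rw [Real.rpow_neg zero_le_two, inv_mul_eq_div, le_div_iff₀' (by positivity)]
      exact (mem_filter.mp hy).2
    _ = 2 ^ (-c) * ∑ y ∈ A, P y := (mul_sum _ _ _).symm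
    _ ≤ 2 ^ (-c) * 1 := by
      gcongr
      exact (sum_le_sum_of_subset_of_nonneg (subset_univ A) fun y _ _ => hP0 y).trans hP1
    _ = 2 ^ (-c) := mul_one _
  have hS_pos : 0 < ∑ y ∈ A, prodMarginals P y := by
    obtain ⟨y, hyA, hy⟩ := exists_lt_of_sum_lt (f := fun _ => 0) (g := P) (s := A) (by
      rw [sum_const_zero]
      linarith)
    exact sum_pos' (fun y _ => prodMarginals_nonneg hP0 y) ⟨y, hyA, prodMarginals_pos hP0 hy⟩
  have hlog := Real.logb_le_logb_of_le one_lt_two hS_pos hS_le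
  rw [Real.logb_rpow two_pos (by norm_num)] at hlog
  linarith [neg_logb_le_IminSmooth P hA]

end ProdMarginals

section PiProd

variable {α : Type*} [Fintype α] {w : α → ℝ} {n : ℕ}

theorem sum_pi_prod_eq_one (hw1 : ∑ a, w a = 1) : ∑ f : Fin n → α, ∏ j, w (f j) = 1 := by
  classical
  rw [← Fintype.prod_sum (fun _ => w), hw1, prod_const_one]

theorem sum_pi_prod_mul_mul_eq_ite (hw1 : ∑ a, w a = 1) {h : α → ℝ} (hh : ∑ a, w a * h a = 0)
    (i k : Fin n) :
    ∑ f : Fin n → α, (∏ j, w (f j)) * (h (f i) * h (f k))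
      = if i = k then ∑ a, w a * h a ^ 2 else 0 := by
  classical
  -- `h (f i) * h (f k)` is a product of one factor per coordinate, so the sum over `f` factorizes.
  set F : Fin n → α → ℝ := fun j a =>
    w a * ((if j = i then h a else 1) * (if j = k then h a else 1))
  have hF : ∀ f : Fin n → α, (∏ j, w (f j)) * (h (f i) * h (f k)) = ∏ j, F j (f j) :=
    fun f => by simp only [F, prod_mul_distrib, prod_ite_eq', mem_univ, if_true]
  rw [sum_congr rfl fun f _ => hF f, ← Fintype.prod_sum]
  split_ifs with hik
  · subst hik
    rw [prod_eq_single_of_mem i (mem_univ i) fun j _ hj => by simp [F, hj, hw1]]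
    simp [F, sq]
  · exact prod_eq_zero (mem_univ i) (by simp [F, hik, hh])

theorem sum_pi_prod_mul_sum_sq (hw1 : ∑ a, w a = 1) {h : α → ℝ} (hh : ∑ a, w a * h a = 0) :
    ∑ f : Fin n → α, (∏ j, w (f j)) * (∑ i, h (f i)) ^ 2 = n * ∑ a, w a * h a ^ 2 := calc
  _ = ∑ i : Fin n, ∑ k : Fin n, ∑ f : Fin n → α, (∏ j, w (f j)) * (h (f i) * h (f k)) := by
    have hexp : ∀ f : Fin n → α, (∏ j, w (f j)) * (∑ i, h (f i)) ^ 2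
        = ∑ i, ∑ k, (∏ j, w (f j)) * (h (f i) * h (f k)) := fun f => by
      rw [sq, sum_mul_sum, mul_sum]
      simp only [mul_sum]
    rw [sum_congr rfl fun f _ => hexp f, sum_comm]
    exact sum_congr rfl fun i _ => sum_comm
  _ = ∑ _i : Fin n, ∑ a, w a * h a ^ 2 := by
    simp only [sum_pi_prod_mul_mul_eq_ite hw1 hh, sum_ite_eq, mem_univ, if_true]
  _ = _ := by simp

theorem sum_pi_prod_filter_sq_ge_le (hw0 : ∀ a, 0 ≤ w a) (hw1 : ∑ a, w a = 1) {h : α → ℝ}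
    (hh : ∑ a, w a * h a = 0) {s : ℝ} (hs : 0 < s) :
    ∑ f : Fin n → α with s ≤ (∑ i, h (f i)) ^ 2, ∏ j, w (f j)
      ≤ n * (∑ a, w a * h a ^ 2) / s := by
  classical
  have hW0 : ∀ f : Fin n → α, 0 ≤ ∏ j, w (f j) := fun f => prod_nonneg fun j _ => hw0 (f j)
  calc ∑ f : Fin n → α with s ≤ (∑ i, h (f i)) ^ 2, ∏ j, w (f j)
      ≤ ∑ f : Fin n → α with s ≤ (∑ i, h (f i)) ^ 2, (∏ j, w (f j)) * (∑ i, h (f i)) ^ 2 / s :=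
        sum_le_sum fun f hf => by
          rw [le_div_iff₀ hs]
          exact mul_le_mul_of_nonneg_left (mem_filter.mp hf).2 (hW0 f)
    _ ≤ ∑ f : Fin n → α, (∏ j, w (f j)) * (∑ i, h (f i)) ^ 2 / s :=
        sum_le_sum_of_subset_of_nonneg (filter_subset _ _) fun f _ _ => by
          have := hW0 f
          positivity
    _ = n * (∑ a, w a * h a ^ 2) / s := by rw [← sum_div, sum_pi_prod_mul_sum_sq hw1 hh]

/-- The weak law of large numbers for `∑ i, g (f i)` under `w^{⊗n}`, with Chebyshev's rate. -/
theorem one_sub_le_sum_pi_prod_filter (hw0 : ∀ a, 0 ≤ w a) (hw1 : ∑ a, w a = 1) {g : α → ℝ}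
    {t : ℝ} (ht : t < ∑ a, w a * g a) (hn : 0 < n) :
    1 - (∑ a, w a * (g a - ∑ b, w b * g b) ^ 2) / (n * (∑ a, w a * g a - t) ^ 2)
      ≤ ∑ f : Fin n → α with n * t ≤ ∑ i, g (f i), ∏ j, w (f j) := by
  classical
  set μ := ∑ a, w a * g a
  set h : α → ℝ := fun a => g a - μ
  have hh : ∑ a, w a * h a = 0 := by
    simp only [h, mul_sub, sum_sub_distrib, ← sum_mul, hw1, one_mul]
    exact sub_self μ
  have hn' : (0 : ℝ) < n := Nat.cast_pos.mpr hn
  have hs : 0 < (n * (μ - t)) ^ 2 := by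
    have : 0 < μ - t := sub_pos.mpr ht
    positivity
  have hdev : ∀ f : Fin n → α, ¬ n * t ≤ ∑ i, g (f i) →
      (n * (μ - t)) ^ 2 ≤ (∑ i, h (f i)) ^ 2 := by
    intro f hf
    have hsum : ∑ i, h (f i) = ∑ i, g (f i) - n * μ := by simp [h, sum_sub_distrib]
    have hgap : n * (μ - t) ≤ -∑ i, h (f i) := by
      rw [hsum, mul_sub]
      linarith
    simpa only [neg_sq] using pow_le_pow_left₀ (by positivity) hgap 2
  have hbad : ∑ f : Fin n → α with ¬ n * t ≤ ∑ i, g (f i), ∏ j, w (f j)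
      ≤ (∑ a, w a * h a ^ 2) / (n * (μ - t) ^ 2) := calc
    _ ≤ ∑ f : Fin n → α with (n * (μ - t)) ^ 2 ≤ (∑ i, h (f i)) ^ 2, ∏ j, w (f j) :=
      sum_le_sum_of_subset_of_nonneg (monotone_filter_right _ fun f _ => hdev f)
        fun f _ _ => prod_nonneg fun j _ => hw0 (f j)
    _ ≤ n * (∑ a, w a * h a ^ 2) / (n * (μ - t)) ^ 2 :=
      sum_pi_prod_filter_sq_ge_le hw0 hw1 hh hs
    _ = (∑ a, w a * h a ^ 2) / (n * (μ - t) ^ 2) := by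
      field_simp
  have hsplit := sum_filter_add_sum_filter_not univ (fun f : Fin n → α => n * t ≤ ∑ i, g (f i))
    fun f => ∏ j, w (f j)
  rw [sum_pi_prod_eq_one hw1] at hsplit
  linarith

end PiProd

section IidJoint

variable {U V : Type*} [Fintype U] [Fintype V]

theorem sum_filter_iidJoint (p : U × V → ℝ) (n : ℕ) (S : (Fin n → U × V) → Prop)
    [DecidablePred S] :
    ∑ x with S fun i => (x.1 i, x.2 i), iidJoint p n x = ∑ f with S f, ∏ i, p (f i) := by
  simp only [sum_filter]
  exact Fintype.sum_equiv (Equiv.arrowProdEquivProdArrow (Fin n) (fun _ => U) (fun _ => V)).symm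
    _ _ fun _ => rfl

theorem prodMarginals_iidJoint (p : U × V → ℝ) (n : ℕ) (x : (Fin n → U) × (Fin n → V)) :
    prodMarginals (iidJoint p n) x = ∏ i, prodMarginals p (x.1 i, x.2 i) := by
  classical
  simp only [prodMarginals, iidJoint, prod_mul_distrib]
  rw [← Fintype.prod_sum fun i b => p (x.1 i, b), ← Fintype.prod_sum fun i a => p (a, x.2 i)]

theorem rpow_sum_infoDensity_mul_prodMarginals_iidJoint {p : U × V → ℝ} (hp0 : ∀ x, 0 ≤ p x)
    {n : ℕ} {x : (Fin n → U) × (Fin n → V)} (hx : 0 < iidJoint p n x) :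
    (2 : ℝ) ^ (∑ i, infoDensity p (x.1 i, x.2 i)) * prodMarginals (iidJoint p n) x
      = iidJoint p n x := by
  have hpos : ∀ i, 0 < p (x.1 i, x.2 i) := fun i =>
    (hp0 _).lt_of_ne fun h0 => hx.ne' (prod_eq_zero (mem_univ i) h0.symm)
  rw [Real.rpow_sum_of_pos two_pos, prodMarginals_iidJoint, ← prod_mul_distrib]
  exact prod_congr rfl fun i _ => rpow_infoDensity_mul_prodMarginals hp0 (hpos i)

theorem le_IminSmooth_iidJoint {p : U × V → ℝ} (hp0 : ∀ x, 0 ≤ p x) (hp1 : ∑ x, p x = 1)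
    {n : ℕ} {ε c : ℝ} (hε : ε < 1)
    (hA : 1 - ε ≤ ∑ x with c ≤ ∑ i, infoDensity p (x.1 i, x.2 i), iidJoint p n x) :
    c ≤ IminSmooth (iidJoint p n) ε := by
  classical
  have hP0 : ∀ x, 0 ≤ iidJoint p n x := fun x => prod_nonneg fun i _ => hp0 _
  have hP1 : ∑ x, iidJoint p n x = 1 := by
    have := sum_filter_iidJoint p n fun _ => True
    simp only [filter_true] at this
    exact this.trans (sum_pi_prod_eq_one hp1)
  refine le_IminSmooth hP0 hP1.le hε (hA.trans ?_)
  rw [← sum_filter_ne_zero]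
  refine sum_le_sum_of_subset_of_nonneg (fun x hx => ?_) fun x _ _ => hP0 x
  obtain ⟨hx, hne⟩ := mem_filter.mp hx
  rw [mem_filter] at hx ⊢
  refine ⟨mem_univ x, ?_⟩
  rw [← rpow_sum_infoDensity_mul_prodMarginals_iidJoint hp0 ((hP0 x).lt_of_ne' hne)]
  gcongr
  · exact prodMarginals_nonneg hP0 x
  · norm_num
  · exact hx.2

end IidJoint

/-- Eventual lower bound on the normalized classical smooth min Rényi
divergence of iid copies: for any `ε ∈ (0,1)` and any `γ` less than the
Shannon mutual information `I[U;V]`, for all sufficiently large `n`,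
`(1/n) I₀^ε[Uⁿ;Vⁿ] ≥ γ`. -/
theorem smooth_min_renyi_div_iid_eventually_ge
    {U V : Type*} [Fintype U] [Fintype V]
    (p : U × V → ℝ) (hp0 : ∀ x, 0 ≤ p x) (hp1 : ∑ x, p x = 1)
    (ε γ : ℝ) (hε0 : 0 < ε) (hε1 : ε < 1)
    (hγ : γ < ∑ x : U × V, p x *
      Real.logb 2 (p x / ((∑ v, p (x.1, v)) * (∑ u, p (u, x.2))))) :
    ∀ᶠ n : ℕ in Filter.atTop, γ ≤ IminSmooth (iidJoint p n) ε / n := by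
  classical
  set I := ∑ x, p x * infoDensity p x
  replace hγ : γ < I := hγ
  set γ' := (γ + I) / 2 with hγ'_def
  set σ2 := ∑ x, p x * (infoDensity p x - I) ^ 2
  have hγ' : γ' < I := by linarith
  have hvar : ∀ᶠ n : ℕ in atTop, σ2 / (n * (I - γ') ^ 2) ≤ ε := by
    filter_upwards [(tendsto_const_div_atTop_nhds_zero_nat (σ2 / (I - γ') ^ 2)).eventually
      (ge_mem_nhds hε0)] with n hn
    rwa [div_div, mul_comm] at hn
  filter_upwards [hvar, eventually_gt_atTop 0] with n hvar hn
  have hWLLN : 1 - σ2 / (n * (I - γ') ^ 2)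
      ≤ ∑ x with n * γ' ≤ ∑ i, infoDensity p (x.1 i, x.2 i), iidJoint p n x := by
    rw [sum_filter_iidJoint p n fun f => n * γ' ≤ ∑ i, infoDensity p (f i)]
    exact one_sub_le_sum_pi_prod_filter hp0 hp1 hγ' hn
  have hImin := le_IminSmooth_iidJoint hp0 hp1 hε1 (c := n * γ') (by linarith)
  rw [le_div_iff₀ (Nat.cast_pos.mpr hn)]
  nlinarith [show γ ≤ γ' by linarith]
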